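/- Let γ > 1, let A, B: ℝ → (0,∞) be C¹ functions, let Ω ⊆ ℝ² be open, and let ψ ∈ C²(Ω) solve Σ_{i,j} a_{ij}(ψ,∇ψ) ψ_{x_i x_j} = F(ψ,∇ψ) on Ω, where at every point the Bernoulli relation ½|∇ψ|² = B(ψ)ρ² − A(ψ)ρ^{γ+1} has a solution ρ > 0 on the subsonic branch ρ^{γ−1} > 2B(ψ)/((γ+1)A(ψ)). Define m = (ψ_{x₂}, −ψ_{x₁}), ρ = ρ(½|∇ψ|², ψ) the subsonic-branch density, and p = ((γ−1)/γ) A(ψ) ρ^γ. Then (m, p, ρ) is a solution of the steady full Euler equations on Ω, and it is subsonic: |m/ρ|² < γp/ρ everywhere. -/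

import Mathlib

open Set
open scoped ENNReal NNReal

noncomputable section

abbrev E2 : Type := EuclideanSpace ℝ (Fin 2)

/-- The point `(a, b)` of the Euclidean plane. -/
def pt (a b : ℝ) : E2 := (WithLp.equiv 2 (Fin 2 → ℝ)).symm ![a, b]

/-- Partial derivative in the `i`-th coordinate direction. -/
def pd (i : Fin 2) (f : E2 → ℝ) : E2 → ℝ :=
  fun x => fderiv ℝ f x (EuclideanSpace.single i 1)

/-- Iterated mixed partial derivative `∂₁^{k₁} ∂₂^{k₂} f`. -/
def Dmix (k₁ k₂ : ℕ) (f : E2 → ℝ) : E2 → ℝ := (pd 0)^[k₁] ((pd 1)^[k₂] f)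

/-- The steady full Euler equations on `Ω`: conservation of mass, the two momentum
equations, and conservation of energy, with `E = |m|²/(2ρ²) + p/((γ-1)ρ)`. -/
def EulerEqs (γ : ℝ) (Ω : Set E2) (m₁ m₂ p ρ : E2 → ℝ) : Prop :=
  ∀ x ∈ Ω,
    pd 0 m₁ x + pd 1 m₂ x = 0 ∧
    pd 0 (fun y => m₁ y ^ 2 / ρ y) x + pd 1 (fun y => m₁ y * m₂ y / ρ y) x + pd 0 p x = 0 ∧
    pd 0 (fun y => m₁ y * m₂ y / ρ y) x + pd 1 (fun y => m₂ y ^ 2 / ρ y) x + pd 1 p x = 0 ∧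
    pd 0 (fun y => m₁ y *
        ((m₁ y ^ 2 + m₂ y ^ 2) / (2 * ρ y ^ 2) + p y / ((γ - 1) * ρ y) + p y / ρ y)) x +
      pd 1 (fun y => m₂ y *
        ((m₁ y ^ 2 + m₂ y ^ 2) / (2 * ρ y ^ 2) + p y / ((γ - 1) * ρ y) + p y / ρ y)) x = 0

/-- `ρ` is the subsonic-branch solution of the Bernoulli relation
`½|∇ψ|² = B(ψ)ρ² - A(ψ)ρ^{γ+1}` at the point `x`. -/
def BernoulliBranch (γ : ℝ) (A B : ℝ → ℝ) (ψ : E2 → ℝ) (ρ : ℝ) (x : E2) : Prop :=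
  0 < ρ ∧ 2 * B (ψ x) / ((γ + 1) * A (ψ x)) < ρ ^ (γ - 1) ∧
    (pd 0 ψ x ^ 2 + pd 1 ψ x ^ 2) / 2 = B (ψ x) * ρ ^ 2 - A (ψ x) * ρ ^ (γ + 1)

/-- The nondivergence-form reduced equation
`Σ_{i,j} a_{ij}(ψ,∇ψ) ψ_{x_i x_j} = F(ψ,∇ψ)` at the point `x`, with density value `ρ`. -/
def NonDivEq (γ : ℝ) (A B : ℝ → ℝ) (ψ : E2 → ℝ) (ρ : ℝ) (x : E2) : Prop :=
  ((γ - 1) * A (ψ x) * ρ ^ (γ + 1) - pd 1 ψ x ^ 2) * pd 0 (pd 0 ψ) x +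
      pd 0 ψ x * pd 1 ψ x * (pd 0 (pd 1 ψ) x + pd 1 (pd 0 ψ) x) +
      ((γ - 1) * A (ψ x) * ρ ^ (γ + 1) - pd 0 ψ x ^ 2) * pd 1 (pd 1 ψ) x =
    ((γ - 1) / γ) * ρ ^ (γ + 3) *
      (γ * A (ψ x) * deriv B (ψ x) - 2 * deriv A (ψ x) * B (ψ x) +
        A (ψ x) * deriv A (ψ x) * ρ ^ (γ - 1))

/-- The reduced elliptic equation for the stream function on `Ω`: at every point the
Bernoulli relation is solvable on the subsonic branch and, with that density,
the equation `a_{ij}(ψ,∇ψ) ψ_{x_i x_j} = F(ψ,∇ψ)` holds. -/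
def ReducedEq (γ : ℝ) (A B : ℝ → ℝ) (Ω : Set E2) (ψ : E2 → ℝ) : Prop :=
  ∀ x ∈ Ω, ∃ ρ : ℝ, BernoulliBranch γ A B ψ ρ x ∧ NonDivEq γ A B ψ ρ x

/-!
On the subsonic branch `ρ ↦ Bρ² - Aρ^{γ+1}` is strictly decreasing, so the Bernoulli relation
determines `ρ` uniquely there, and the implicit function theorem makes `ρ` a `C¹` function.
With `m = ∇^⊥ψ`, conservation of mass is the symmetry of second derivatives. By Bernoulli the
total enthalpy `E + p/ρ` equals `B(ψ)`, so the energy flux `B(ψ) ∇^⊥ψ` is divergence free.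
Differentiating the Bernoulli relation expresses `∇ρ` through `ψ`; after this substitution and
modulo the Bernoulli relation, `(2Bρ - (γ+1)Aρ^γ) γρ²` times the `i`-th momentum equation is
`γ ∂ᵢψ` times the reduced equation. Subsonicity is the branch condition combined with Bernoulli.
-/

open Filter Topology

section PartialDerivatives

variable {f g : E2 → ℝ} {x : E2} {i : Fin 2}

lemma pd_congr_of_eventuallyEq (h : f =ᶠ[𝓝 x] g) : pd i f x = pd i g x := by
  simp [pd, h.fderiv_eq]

lemma pd_add (hf : DifferentiableAt ℝ f x) (hg : DifferentiableAt ℝ g x) :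
    pd i (fun y => f y + g y) x = pd i f x + pd i g x := by
  simp [pd, fderiv_fun_add hf hg]

lemma pd_sub (hf : DifferentiableAt ℝ f x) (hg : DifferentiableAt ℝ g x) :
    pd i (fun y => f y - g y) x = pd i f x - pd i g x := by
  simp [pd, fderiv_fun_sub hf hg]

lemma pd_neg : pd i (fun y => -f y) x = -pd i f x := by
  simp [pd, fderiv_fun_neg]

lemma pd_mul (hf : DifferentiableAt ℝ f x) (hg : DifferentiableAt ℝ g x) :
    pd i (fun y => f y * g y) x = pd i f x * g x + f x * pd i g x := by
  simp [pd, fderiv_fun_mul hf hg]; ring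

lemma pd_const_mul (c : ℝ) (hf : DifferentiableAt ℝ f x) :
    pd i (fun y => c * f y) x = c * pd i f x := by
  simp [pd, fderiv_const_mul hf]

lemma pd_div_const (hf : DifferentiableAt ℝ f x) (c : ℝ) :
    pd i (fun y => f y / c) x = pd i f x / c := by
  simpa only [div_eq_inv_mul] using pd_const_mul c⁻¹ hf

lemma pd_comp {h : ℝ → ℝ} (hh : DifferentiableAt ℝ h (f x))
    (hf : DifferentiableAt ℝ f x) :
    pd i (fun y => h (f y)) x = deriv h (f x) * pd i f x := by
  simp [pd, ← Function.comp_def h f, fderiv_comp x hh hf, mul_comm]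

lemma pd_sq (hf : DifferentiableAt ℝ f x) :
    pd i (fun y => f y ^ 2) x = 2 * f x * pd i f x := by
  rw [pd_comp (differentiableAt_pow 2) hf, (hasDerivAt_pow 2 (f x)).deriv]
  norm_num

lemma pd_rpow (c : ℝ) (hf : DifferentiableAt ℝ f x) (hfx : f x ≠ 0) :
    pd i (fun y => f y ^ c) x = c * f x ^ (c - 1) * pd i f x := by
  rw [pd_comp (Real.differentiableAt_rpow_const_of_ne c hfx) hf, Real.deriv_rpow_const]

lemma pd_div (hf : DifferentiableAt ℝ f x) (hg : DifferentiableAt ℝ g x) (hgx : g x ≠ 0) :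
    pd i (fun y => f y / g y) x = (pd i f x * g x - f x * pd i g x) / g x ^ 2 := by
  simp only [div_eq_mul_inv]
  rw [pd_mul (g := fun y => (g y)⁻¹) hf (hg.inv hgx), pd_comp (differentiableAt_inv hgx) hg,
    deriv_inv]
  field_simp
  ring

lemma contDiffAt_pd {ψ : E2 → ℝ} (h : ContDiffAt ℝ 2 ψ x) : ContDiffAt ℝ 1 (pd i ψ) x :=
  (h.fderiv_right one_add_one_eq_two.le).clm_apply contDiffAt_const

lemma pd_pd_comm {ψ : E2 → ℝ} (h : ContDiffAt ℝ 2 ψ x) :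
    pd 0 (pd 1 ψ) x = pd 1 (pd 0 ψ) x := by
  have hd : DifferentiableAt ℝ (fderiv ℝ ψ) x :=
    (h.fderiv_right one_add_one_eq_two.le).differentiableAt one_ne_zero
  have hsecond : ∀ i j : Fin 2, pd i (pd j ψ) x =
      fderiv ℝ (fderiv ℝ ψ) x (EuclideanSpace.single i 1) (EuclideanSpace.single j 1) := by
    intro i j
    change fderiv ℝ (fun y => fderiv ℝ ψ y (EuclideanSpace.single j 1)) x _ = _
    simp [fderiv_clm_apply hd (differentiableAt_const _)]
  rw [hsecond, hsecond, h.isSymmSndFDerivAt (by simp)]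

end PartialDerivatives

lemma rpow_eq_rpow_mul_pow {ρ c d : ℝ} (hρ : ρ ≠ 0) (n : ℕ) (h : d = c + n) :
    ρ ^ d = ρ ^ c * ρ ^ n := by
  rw [h, Real.rpow_add_natCast hρ]

lemma rpow_sub_one_mul_self {ρ : ℝ} (hρ : ρ ≠ 0) (γ : ℝ) : ρ ^ (γ - 1) * ρ = ρ ^ γ := by
  rw [← Real.rpow_add_one hρ, sub_add_cancel]

def bernoulliFn (γ a b ρ : ℝ) : ℝ := b * ρ ^ 2 - a * ρ ^ (γ + 1)

def subsonicBranch (γ a b : ℝ) : Set ℝ :=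
  {ρ | 0 < ρ ∧ 2 * b / ((γ + 1) * a) < ρ ^ (γ - 1)}

section Bernoulli

variable {γ a b ρ : ℝ}

lemma hasDerivAt_bernoulliFn (hρ : ρ ≠ 0) :
    HasDerivAt (bernoulliFn γ a b) (2 * b * ρ - (γ + 1) * a * ρ ^ γ) ρ := by
  refine (((hasDerivAt_pow 2 ρ).const_mul b).fun_sub
    ((Real.hasDerivAt_rpow_const (p := γ + 1) (Or.inl hρ)).const_mul a)).congr_deriv ?_
  norm_num
  ring

lemma bernoulliFn_deriv_neg (hγ : -1 < γ) (ha : 0 < a) (hρ : ρ ∈ subsonicBranch γ a b) :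
    2 * b * ρ - (γ + 1) * a * ρ ^ γ < 0 := by
  obtain ⟨hρ0, hbranch⟩ := hρ
  rw [div_lt_iff₀ (by nlinarith)] at hbranch
  rw [← rpow_sub_one_mul_self hρ0.ne']
  nlinarith

lemma bernoulliFn_strictAntiOn (hγ : 1 ≤ γ) (ha : 0 < a) :
    StrictAntiOn (bernoulliFn γ a b) (subsonicBranch γ a b) := by
  have hconvex : Convex ℝ (subsonicBranch γ a b) := by
    refine Set.OrdConnected.convex ⟨fun ρ₁ h₁ ρ₂ _ z hz => ?_⟩
    exact ⟨h₁.1.trans_le hz.1,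
      h₁.2.trans_le (Real.rpow_le_rpow h₁.1.le hz.1 (by linarith))⟩
  exact strictAntiOn_of_hasDerivWithinAt_neg hconvex
    (fun ρ hρ => (hasDerivAt_bernoulliFn hρ.1.ne').continuousAt.continuousWithinAt)
    (fun ρ hρ => (hasDerivAt_bernoulliFn (interior_subset hρ).1.ne').hasDerivWithinAt)
    (fun ρ hρ => bernoulliFn_deriv_neg (by linarith) ha (interior_subset hρ))

end Bernoulli

lemma ContinuousLinearMap.isInvertible_of_apply_one_ne_zero {L : ℝ →L[ℝ] ℝ}
    (hL : L 1 ≠ 0) : L.IsInvertible := by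
  refine .of_inverse (g := (L 1)⁻¹ • .id ℝ ℝ) ?_ ?_ <;> ext <;> simp [hL]

theorem contDiffAt_of_implicit {E : Type*} [NormedAddCommGroup E] [NormedSpace ℝ E]
    [CompleteSpace E] {G : E × ℝ → ℝ} {g : E → ℝ} {x : E} {n : WithTop ℕ∞} {c : ℝ}
    {S : Set (E × ℝ)} (hG : ContDiffAt ℝ n G (x, g x)) (hn : n ≠ 0)
    (hc : HasDerivAt (fun τ => G (x, τ)) c (g x)) (hc0 : c ≠ 0) (hS : S ∈ 𝓝 (x, g x))
    (hgS : ∀ᶠ y in 𝓝 x, (y, g y) ∈ S ∧ G (y, g y) = G (x, g x))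
    (hinj : ∀ y s t, (y, s) ∈ S → (y, t) ∈ S → G (y, s) = G (y, t) → s = t) :
    ContDiffAt ℝ n g x := by
  have hpartial : (fderiv ℝ G (x, g x) ∘L .inr ℝ E ℝ) 1 = c := by
    have hcomp := (hG.differentiableAt hn).hasFDerivAt.comp_hasDerivAt (g x)
      ((hasDerivAt_const (g x) x).prodMk (hasDerivAt_id (g x)))
    exact hcomp.unique hc
  have hinv := ContinuousLinearMap.isInvertible_of_apply_one_ne_zero (hpartial ▸ hc0)
  set φ := hG.implicitFunction hn hinv
  have hφ : ContDiffAt ℝ n φ x := hG.contDiffAt_implicitFunction hn hinv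
  have hφx : φ x = g x := hG.implicitFunction_apply_self hn hinv
  have hgraph : Tendsto (fun y => (y, φ y)) (𝓝 x) (𝓝 (x, g x)) := by
    simpa [hφx] using (continuousAt_id.prodMk (hφ.continuousAt)).tendsto
  refine hφ.congr_of_eventuallyEq ?_
  filter_upwards [hgS, hgraph.eventually hS, hG.eventually_apply_implicitFunction hn hinv]
    with y ⟨hgy, hGg⟩ hφy hGφ
  exact hinj y _ _ hgy hφy (hGg.trans hGφ.symm)

lemma bernoulliBranch_iff {γ : ℝ} {A B : ℝ → ℝ} {ψ : E2 → ℝ} {ρ : ℝ} {x : E2} :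
    BernoulliBranch γ A B ψ ρ x ↔ ρ ∈ subsonicBranch γ (A (ψ x)) (B (ψ x)) ∧
      (pd 0 ψ x ^ 2 + pd 1 ψ x ^ 2) / 2 = bernoulliFn γ (A (ψ x)) (B (ψ x)) ρ :=
  and_assoc.symm

theorem contDiffAt_density {γ : ℝ} (hγ : 1 < γ) {A B : ℝ → ℝ} (hA : ContDiff ℝ 1 A)
    (hB : ContDiff ℝ 1 B) (hApos : ∀ s, 0 < A s) {ψ ρ : E2 → ℝ} {x : E2}
    (hψ : ContDiffAt ℝ 2 ψ x) (hρ : ∀ᶠ y in 𝓝 x, BernoulliBranch γ A B ψ (ρ y) y) :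
    ContDiffAt ℝ 1 ρ x := by
  obtain ⟨hρx, -⟩ := bernoulliBranch_iff.1 hρ.self_of_nhds
  have hψ₁ : ContDiffAt ℝ 1 ψ x := hψ.of_le one_le_two
  have hfst : ContDiffAt ℝ 1 (Prod.fst : E2 × ℝ → E2) (x, ρ x) := contDiffAt_fst
  have hG : ContDiffAt ℝ 1 (fun p : E2 × ℝ => bernoulliFn γ (A (ψ p.1)) (B (ψ p.1)) p.2 -
      (pd 0 ψ p.1 ^ 2 + pd 1 ψ p.1 ^ 2) / 2) (x, ρ x) := by
    have hAψ := hA.contDiffAt.comp (x, ρ x) (hψ₁.comp (x, ρ x) hfst)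
    have hBψ := hB.contDiffAt.comp (x, ρ x) (hψ₁.comp (x, ρ x) hfst)
    have hpd (i : Fin 2) := (contDiffAt_pd (i := i) hψ).comp (x, ρ x) hfst
    have hpow := (Real.contDiffAt_rpow_const_of_ne (p := γ + 1) (n := 1) hρx.1.ne').comp
      (x, ρ x) contDiffAt_snd
    exact ((hBψ.mul (contDiffAt_snd.pow 2)).sub (hAψ.mul hpow)).sub
      ((((hpd 0).pow 2).add ((hpd 1).pow 2)).div_const 2)
  have hS : ∀ᶠ p in 𝓝 (x, ρ x), p.2 ∈ subsonicBranch γ (A (ψ p.1)) (B (ψ p.1)) := by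
    have hψc : ContinuousAt (fun p : E2 × ℝ => ψ p.1) (x, ρ x) :=
      hψ.continuousAt.comp continuousAt_fst
    have hthreshold : ContinuousAt
        (fun p : E2 × ℝ => 2 * B (ψ p.1) / ((γ + 1) * A (ψ p.1))) (x, ρ x) :=
      ((hB.continuous.continuousAt.comp hψc).const_mul 2).div
        ((hA.continuous.continuousAt.comp hψc).const_mul _)
        (mul_pos (by linarith) (hApos _)).ne'
    exact (continuousAt_snd.eventually (lt_mem_nhds hρx.1)).and
      (hthreshold.eventually_lt (continuousAt_snd.rpow_const (Or.inl hρx.1.ne')) hρx.2)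
  refine contDiffAt_of_implicit hG one_ne_zero
    ((hasDerivAt_bernoulliFn (a := A (ψ x)) (b := B (ψ x)) hρx.1.ne').sub_const
      ((pd 0 ψ x ^ 2 + pd 1 ψ x ^ 2) / 2))
    (bernoulliFn_deriv_neg (by linarith) (hApos _) hρx).ne hS ?_ ?_
  · filter_upwards [hρ] with y hy
    obtain ⟨hmem, heq⟩ := bernoulliBranch_iff.1 hy
    obtain ⟨-, heqx⟩ := bernoulliBranch_iff.1 hρ.self_of_nhds
    exact ⟨hmem, by rw [← heq, ← heqx, sub_self, sub_self]⟩
  · intro y s t hs ht hst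
    exact (bernoulliFn_strictAntiOn hγ.le (hApos _)).injOn hs ht (sub_left_inj.1 hst)

section SubsonicBranch

variable {γ ρ : ℝ} {A B : ℝ → ℝ} {ψ : E2 → ℝ} {x : E2}

lemma BernoulliBranch.enthalpy_eq (hγ : 1 < γ) (h : BernoulliBranch γ A B ψ ρ x) :
    (pd 1 ψ x ^ 2 + (-pd 0 ψ x) ^ 2) / (2 * ρ ^ 2) +
        (γ - 1) / γ * A (ψ x) * ρ ^ γ / ((γ - 1) * ρ) + (γ - 1) / γ * A (ψ x) * ρ ^ γ / ρ =
      B (ψ x) := by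
  obtain ⟨hρ, -, hbern⟩ := h
  have hγ0 : γ ≠ 0 := by linarith
  have hγ1 : γ - 1 ≠ 0 := by linarith
  rw [rpow_eq_rpow_mul_pow hρ.ne' 2 (c := γ - 1) (by push_cast; ring)] at hbern
  rw [← rpow_sub_one_mul_self hρ.ne']
  field_simp
  linear_combination 2 * γ * hbern

lemma BernoulliBranch.subsonic (hγ : 1 < γ) (hA : 0 < A (ψ x))
    (h : BernoulliBranch γ A B ψ ρ x) :
    (pd 1 ψ x / ρ) ^ 2 + (-pd 0 ψ x / ρ) ^ 2 < γ * ((γ - 1) / γ * A (ψ x) * ρ ^ γ) / ρ := by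
  obtain ⟨hρ, hbranch, hbern⟩ := h
  rw [div_lt_iff₀ (by positivity)] at hbranch
  rw [rpow_eq_rpow_mul_pow hρ.ne' 2 (c := γ - 1) (by push_cast; ring)] at hbern
  rw [← rpow_sub_one_mul_self hρ.ne']
  field_simp
  nlinarith [mul_lt_mul_of_pos_right hbranch (by positivity : 0 < ρ ^ 2)]

end SubsonicBranch

/-- Pointwise values: `u, v` is `∇ψ`, `uu, uv, vv` the Hessian of `ψ`, `ρ₀, ρ₁` is `∇ρ`,
`a, a', b, b'` are `A, A', B, B'` at `ψ`, and `r = ρ^{γ-1}`. The conclusion is `γρ²` times the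
first momentum equation. -/
theorem momentum_identity {γ a a' b b' r u v uu uv vv ρ ρ₀ ρ₁ : ℝ} (hγ : γ ≠ 0)
    (hD : 2 * b * ρ - (γ + 1) * a * (r * ρ) ≠ 0)
    (hbern : (u ^ 2 + v ^ 2) / 2 = b * ρ ^ 2 - a * (r * ρ ^ 2))
    (hρ₀ : (2 * b * ρ - (γ + 1) * a * (r * ρ)) * ρ₀ =
      u * uu + v * uv - b' * u * ρ ^ 2 + a' * u * (r * ρ ^ 2))
    (hρ₁ : (2 * b * ρ - (γ + 1) * a * (r * ρ)) * ρ₁ =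
      u * uv + v * vv - b' * v * ρ ^ 2 + a' * v * (r * ρ ^ 2))
    (hN : ((γ - 1) * a * (r * ρ ^ 2) - v ^ 2) * uu + u * v * (uv + uv) +
        ((γ - 1) * a * (r * ρ ^ 2) - u ^ 2) * vv =
      (γ - 1) / γ * (r * ρ ^ 4) * (γ * a * b' - 2 * a' * b + a * a' * r)) :
    γ * ((v * uv - u * vv) * ρ + ((γ - 1) * a * (r * ρ ^ 2) - v ^ 2) * ρ₀ + u * v * ρ₁) +
      (γ - 1) * a' * u * (r * ρ ^ 3) = 0 := by
  have hNγ : γ * (((γ - 1) * a * (r * ρ ^ 2) - v ^ 2) * uu + u * v * (uv + uv) +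
        ((γ - 1) * a * (r * ρ ^ 2) - u ^ 2) * vv) =
      (γ - 1) * (r * ρ ^ 4) * (γ * a * b' - 2 * a' * b + a * a' * r) := by
    rw [hN]; field_simp
  refine (mul_eq_zero.1 ?_).resolve_left hD
  linear_combination u * hNγ + (2 * γ * (u * vv - v * uv)) * hbern +
    (γ * ((γ - 1) * a * (r * ρ ^ 2) - v ^ 2)) * hρ₀ + (γ * u * v) * hρ₁

section EulerEquations

variable {γ : ℝ} {A B : ℝ → ℝ} {ψ ρ : E2 → ℝ} {x : E2}

theorem pd_density_of_bernoulli (hA : Differentiable ℝ A) (hB : Differentiable ℝ B)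
    (hψ : ContDiffAt ℝ 2 ψ x) (hρ : DifferentiableAt ℝ ρ x) (hρx : ρ x ≠ 0)
    (hbern : ∀ᶠ y in 𝓝 x,
      (pd 0 ψ y ^ 2 + pd 1 ψ y ^ 2) / 2 = bernoulliFn γ (A (ψ y)) (B (ψ y)) (ρ y))
    (i : Fin 2) :
    (2 * B (ψ x) * ρ x - (γ + 1) * A (ψ x) * ρ x ^ γ) * pd i ρ x =
      pd 0 ψ x * pd i (pd 0 ψ) x + pd 1 ψ x * pd i (pd 1 ψ) x -
        deriv B (ψ x) * pd i ψ x * ρ x ^ 2 + deriv A (ψ x) * pd i ψ x * ρ x ^ (γ + 1) := by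
  have hψd : DifferentiableAt ℝ ψ x := hψ.differentiableAt two_ne_zero
  have hu := (contDiffAt_pd (i := 0) hψ).differentiableAt one_ne_zero
  have hv := (contDiffAt_pd (i := 1) hψ).differentiableAt one_ne_zero
  have hAψ : DifferentiableAt ℝ (fun y => A (ψ y)) x := hA.differentiableAt.comp x hψd
  have hBψ : DifferentiableAt ℝ (fun y => B (ψ y)) x := hB.differentiableAt.comp x hψd
  have h := pd_congr_of_eventuallyEq (i := i) hbern
  simp only [bernoulliFn] at h
  rw [pd_div_const ((hu.fun_pow 2).fun_add (hv.fun_pow 2)), pd_add (hu.fun_pow 2) (hv.fun_pow 2),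
    pd_sq hu, pd_sq hv,
    pd_sub (hBψ.fun_mul (hρ.fun_pow 2)) (hAψ.fun_mul (hρ.rpow_const (Or.inl hρx))),
    pd_mul hBψ (hρ.fun_pow 2), pd_mul hAψ (hρ.rpow_const (Or.inl hρx)),
    pd_comp hB.differentiableAt hψd, pd_comp hA.differentiableAt hψd, pd_sq hρ,
    pd_rpow _ hρ hρx] at h
  norm_num at h
  linear_combination -h

lemma pd_pressure (c : ℝ) (i : Fin 2) (hA : DifferentiableAt ℝ A (ψ x))
    (hψ : DifferentiableAt ℝ ψ x) (hρ : DifferentiableAt ℝ ρ x) (hρx : ρ x ≠ 0) :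
    pd i (fun y => c * A (ψ y) * ρ y ^ γ) x =
      c * (deriv A (ψ x) * pd i ψ x * ρ x ^ γ + A (ψ x) * (γ * ρ x ^ (γ - 1) * pd i ρ x)) := by
  have hAψ : DifferentiableAt ℝ (fun y => A (ψ y)) x := hA.comp x hψ
  rw [pd_mul (hAψ.const_mul c) (hρ.rpow_const (Or.inl hρx)), pd_const_mul c hAψ, pd_comp hA hψ,
    pd_rpow γ hρ hρx]
  ring

theorem momentum_eqs_at (hγ : 1 < γ) (hA : Differentiable ℝ A) (hB : Differentiable ℝ B)
    (hApos : 0 < A (ψ x)) (hψ : ContDiffAt ℝ 2 ψ x) (hρ : DifferentiableAt ℝ ρ x)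
    (hbranch : ∀ᶠ y in 𝓝 x, BernoulliBranch γ A B ψ (ρ y) y)
    (hN : NonDivEq γ A B ψ (ρ x) x) :
    pd 0 (fun y => pd 1 ψ y ^ 2 / ρ y) x + pd 1 (fun y => pd 1 ψ y * -pd 0 ψ y / ρ y) x +
        pd 0 (fun y => (γ - 1) / γ * A (ψ y) * ρ y ^ γ) x = 0 ∧
      pd 0 (fun y => pd 1 ψ y * -pd 0 ψ y / ρ y) x + pd 1 (fun y => (-pd 0 ψ y) ^ 2 / ρ y) x +
        pd 1 (fun y => (γ - 1) / γ * A (ψ y) * ρ y ^ γ) x = 0 := by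
  obtain ⟨hρx, hbernx⟩ := bernoulliBranch_iff.1 hbranch.self_of_nhds
  have hρ0 : ρ x ≠ 0 := hρx.1.ne'
  have hγ0 : γ ≠ 0 := by linarith
  have hψd : DifferentiableAt ℝ ψ x := hψ.differentiableAt two_ne_zero
  have hu := (contDiffAt_pd (i := 0) hψ).differentiableAt one_ne_zero
  have hv := (contDiffAt_pd (i := 1) hψ).differentiableAt one_ne_zero
  have hsymm := pd_pd_comm hψ
  have hpow₁ : ρ x ^ (γ - 1) * ρ x = ρ x ^ γ := rpow_sub_one_mul_self hρ0 γ
  have hpow₂ : ρ x ^ (γ + 1) = ρ x ^ (γ - 1) * ρ x ^ 2 :=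
    rpow_eq_rpow_mul_pow hρ0 2 (by push_cast; ring)
  have hpow₄ : ρ x ^ (γ + 3) = ρ x ^ (γ - 1) * ρ x ^ 4 :=
    rpow_eq_rpow_mul_pow hρ0 4 (by push_cast; ring)
  have hD := (bernoulliFn_deriv_neg (by linarith) hApos hρx).ne
  have hgrad := pd_density_of_bernoulli hA hB hψ hρ hρ0
    (hbranch.mono fun y hy => (bernoulliBranch_iff.1 hy).2)
  have hgrad₀ := hgrad 0
  have hgrad₁ := hgrad 1
  simp only [NonDivEq, bernoulliFn, ← hpow₁, hpow₂, hpow₄, ← hsymm] at hD hgrad₀ hgrad₁ hbernx hN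
  have hmom₀ := momentum_identity hγ0 hD hbernx hgrad₀ hgrad₁ hN
  -- The second momentum equation is the first one with the two coordinates exchanged.
  have hmom₁ := momentum_identity (u := pd 1 ψ x) (v := pd 0 ψ x) (uu := pd 1 (pd 1 ψ) x)
    (uv := pd 0 (pd 1 ψ) x) (vv := pd 0 (pd 0 ψ) x) (a' := deriv A (ψ x))
    (b' := deriv B (ψ x)) (ρ₀ := pd 1 ρ x) (ρ₁ := pd 0 ρ x) hγ0 hD
    (by linear_combination hbernx) (by linear_combination hgrad₁) (by linear_combination hgrad₀)
    (by linear_combination hN)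
  have hcross : DifferentiableAt ℝ (fun y => pd 1 ψ y * -pd 0 ψ y) x := hv.fun_mul hu.fun_neg
  simp only [pd_div (hv.fun_pow 2) hρ hρ0, pd_div hcross hρ hρ0,
    pd_div (hu.fun_neg.fun_pow 2) hρ hρ0, pd_mul hv hu.fun_neg, pd_sq hv, pd_sq hu.fun_neg, pd_neg,
    pd_pressure _ _ hA.differentiableAt hψd hρ hρ0, ← hpow₁, ← hsymm]
  exact ⟨by field_simp; linear_combination hmom₀, by field_simp; linear_combination hmom₁⟩

lemma mass_eq_at (hψ : ContDiffAt ℝ 2 ψ x) :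
    pd 0 (pd 1 ψ) x + pd 1 (fun y => -pd 0 ψ y) x = 0 := by
  rw [pd_neg, pd_pd_comm hψ, add_neg_cancel]

lemma energy_eq_at {h : E2 → ℝ} (hB : Differentiable ℝ B) (hψ : ContDiffAt ℝ 2 ψ x)
    (hh : h =ᶠ[𝓝 x] fun y => B (ψ y)) :
    pd 0 (fun y => pd 1 ψ y * h y) x + pd 1 (fun y => -pd 0 ψ y * h y) x = 0 := by
  have hψd : DifferentiableAt ℝ ψ x := hψ.differentiableAt two_ne_zero
  have hu := (contDiffAt_pd (i := 0) hψ).differentiableAt one_ne_zero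
  have hv := (contDiffAt_pd (i := 1) hψ).differentiableAt one_ne_zero
  have hBψ : DifferentiableAt ℝ (fun y => B (ψ y)) x := hB.differentiableAt.comp x hψd
  have hflux (m : E2 → ℝ) (i : Fin 2) :
      pd i (fun y => m y * h y) x = pd i (fun y => m y * B (ψ y)) x :=
    pd_congr_of_eventuallyEq (by filter_upwards [hh] with y hy; rw [hy])
  rw [hflux, hflux, pd_mul hv hBψ, pd_mul hu.fun_neg hBψ, pd_neg,
    pd_comp hB.differentiableAt hψd, pd_comp hB.differentiableAt hψd, pd_pd_comm hψ]
  ring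

end EulerEquations

theorem reduced_equation_gives_euler_solution_general
    (γ : ℝ) (hγ : 1 < γ) (A B : ℝ → ℝ)
    (hA : ContDiff ℝ 1 A) (hB : ContDiff ℝ 1 B)
    (hApos : ∀ s, 0 < A s)
    (Ω : Set E2) (hΩ : IsOpen Ω) (ψ : E2 → ℝ) (hψ : ContDiffOn ℝ 2 ψ Ω)
    (hsol : ReducedEq γ A B Ω ψ) :
    ∃ ρf : E2 → ℝ,
      (∀ x ∈ Ω, BernoulliBranch γ A B ψ (ρf x) x) ∧
      ContDiffOn ℝ 1 ρf Ω ∧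
      EulerEqs γ Ω (fun y => pd 1 ψ y) (fun y => -pd 0 ψ y)
        (fun y => ((γ - 1) / γ) * A (ψ y) * ρf y ^ γ) ρf ∧
      ∀ x ∈ Ω,
        (pd 1 ψ x / ρf x) ^ 2 + (-pd 0 ψ x / ρf x) ^ 2 <
          γ * (((γ - 1) / γ) * A (ψ x) * ρf x ^ γ) / ρf x := by
  choose! ρ hρ using hsol
  have hψ₂ (x) (hx : x ∈ Ω) : ContDiffAt ℝ 2 ψ x := hψ.contDiffAt (hΩ.mem_nhds hx)
  have hbranch (x) (hx : x ∈ Ω) : ∀ᶠ y in 𝓝 x, BernoulliBranch γ A B ψ (ρ y) y :=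
    eventually_of_mem (hΩ.mem_nhds hx) fun y hy => (hρ y hy).1
  have hρ₁ (x) (hx : x ∈ Ω) : ContDiffAt ℝ 1 ρ x :=
    contDiffAt_density hγ hA hB hApos (hψ₂ x hx) (hbranch x hx)
  refine ⟨ρ, fun x hx => (hρ x hx).1, fun x hx => (hρ₁ x hx).contDiffWithinAt, fun x hx => ?_,
    fun x hx => (hρ x hx).1.subsonic hγ (hApos _)⟩
  have hA' := hA.differentiable one_ne_zero
  have hB' := hB.differentiable one_ne_zero
  obtain ⟨hmom₁, hmom₂⟩ := momentum_eqs_at hγ hA' hB' (hApos _) (hψ₂ x hx)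
    ((hρ₁ x hx).differentiableAt one_ne_zero) (hbranch x hx) (hρ x hx).2
  exact ⟨mass_eq_at (hψ₂ x hx), hmom₁, hmom₂,
    energy_eq_at hB' (hψ₂ x hx) ((hbranch x hx).mono fun y hy => hy.enthalpy_eq hγ)⟩

/-- Section 6 of the paper. A `C²` solution `ψ` of the reduced
equation `a_{ij}(ψ,∇ψ)ψ_{x_ix_j} = F(ψ,∇ψ)` gives rise, via
`m = (ψ_{x₂}, -ψ_{x₁})`, the subsonic-branch density `ρ`, and
`p = ((γ-1)/γ)A(ψ)ρ^γ`, to a solution of the steady full Euler equations which is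
subsonic everywhere. -/
theorem reduced_equation_gives_euler_solution
    (γ : ℝ) (hγ : 1 < γ) (A B : ℝ → ℝ)
    (hA : ContDiff ℝ 1 A) (hB : ContDiff ℝ 1 B)
    (hApos : ∀ s, 0 < A s) (hBpos : ∀ s, 0 < B s)
    (Ω : Set E2) (hΩ : IsOpen Ω) (ψ : E2 → ℝ) (hψ : ContDiffOn ℝ 2 ψ Ω)
    (hsol : ReducedEq γ A B Ω ψ) :
    ∃ ρf : E2 → ℝ,
      (∀ x ∈ Ω, BernoulliBranch γ A B ψ (ρf x) x) ∧
      ContDiffOn ℝ 1 ρf Ω ∧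
      EulerEqs γ Ω (fun y => pd 1 ψ y) (fun y => -pd 0 ψ y)
        (fun y => ((γ - 1) / γ) * A (ψ y) * ρf y ^ γ) ρf ∧
      ∀ x ∈ Ω,
        (pd 1 ψ x / ρf x) ^ 2 + (-pd 0 ψ x / ρf x) ^ 2 <
          γ * (((γ - 1) / γ) * A (ψ x) * ρf x ^ γ) / ρf x :=
  reduced_equation_gives_euler_solution_general γ hγ A B hA hB hApos Ω hΩ ψ hψ hsol
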